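/- The set W̃ = ⋃_{k∈ℤ} E_k ∪ {(x,0,0) : x ∈ ℝ} is contained in the stable set of the origin: for every b ∈ W̃, fⁿ(b) → (0,0,0) as n → +∞, i.e. W̃ ⊆ W^s_f(0,0,0). -/

import Mathlib

noncomputable section

open Set Filter Topology

/-- `T₁(x,y,z) = (x/2, 2y, 2z)`. -/
def T1 : ℝ × ℝ × ℝ → ℝ × ℝ × ℝ := fun v => (v.1 / 2, 2 * v.2.1, 2 * v.2.2)

/-- `T₂(x,y,z) = (x/2, y/2, z/2)`. -/
def T2 : ℝ × ℝ × ℝ → ℝ × ℝ × ℝ := fun v => (v.1 / 2, v.2.1 / 2, v.2.2 / 2)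

/-- The `n`-th power (`n ∈ ℤ`) of `T₂`: `T₂ⁿ(v) = 2⁻ⁿ • v`. -/
def T2pow (n : ℤ) : ℝ × ℝ × ℝ → ℝ × ℝ × ℝ := fun v => ((2 : ℝ) ^ (-n)) • v

/-- The closed (Euclidean) ball `B` of radius `r` centered at `(3/2, 0, 0)`. -/
def Bset (r : ℝ) : Set (ℝ × ℝ × ℝ) :=
  {v | (v.1 - 3 / 2) ^ 2 + v.2.1 ^ 2 + v.2.2 ^ 2 ≤ r ^ 2}

/-- `B_n = T₂ⁿ(B)` for `n ∈ ℤ`. -/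
def Bn (r : ℝ) (n : ℤ) : Set (ℝ × ℝ × ℝ) := T2pow n '' Bset r

/-- The continuum `E`: the union of the segment `[3/2 - r/2, 3/2 + r/2] × {0} × {0}`,
the segment `{3/2 - r/2} × [0, r/2] × {0}`, and the segments
`{3/2 - r/2 + r/k} × [0, r/2] × {0}` for integers `k ≥ 1`. -/
def Eset (r : ℝ) : Set (ℝ × ℝ × ℝ) :=
  {v | v.1 ∈ Icc (3 / 2 - r / 2) (3 / 2 + r / 2) ∧ v.2.1 = 0 ∧ v.2.2 = 0} ∪
  {v | v.1 = 3 / 2 - r / 2 ∧ v.2.1 ∈ Icc 0 (r / 2) ∧ v.2.2 = 0} ∪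
  {v | ∃ k : ℕ, 1 ≤ k ∧ v.1 = 3 / 2 - r / 2 + r / (k : ℝ) ∧ v.2.1 ∈ Icc 0 (r / 2) ∧ v.2.2 = 0}

/-- `E_k = T₂ᵏ(E)` for `k ∈ ℤ`. -/
def Ek (r : ℝ) (k : ℤ) : Set (ℝ × ℝ × ℝ) := T2pow k '' Eset r

/-- `W̃ = ⋃_{k ∈ ℤ} E_k ∪ {(x,0,0) : x ∈ ℝ}`. -/
def Wtilde (r : ℝ) : Set (ℝ × ℝ × ℝ) :=
  (⋃ k : ℤ, Ek r k) ∪ {v | v.2.1 = 0 ∧ v.2.2 = 0}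

/-- The (global) stable set `W^s_f(a) = {b : ‖fⁿ(a) - fⁿ(b)‖ → 0 as n → +∞}`. -/
def Ws (f : ℝ × ℝ × ℝ → ℝ × ℝ × ℝ) (a : ℝ × ℝ × ℝ) : Set (ℝ × ℝ × ℝ) :=
  {b | Tendsto (fun n : ℕ => ‖f^[n] a - f^[n] b‖) atTop (𝓝 0)}

/-- Grönwall: a scalar function with `|y'| ≤ K |y|` and `y 0 = 0` vanishes for `t ≥ 0`. -/
lemma aux_gronwall_zero (y d : ℝ → ℝ) (K : ℝ)
    (hy : ∀ t, HasDerivAt y (d t) t) (hb : ∀ t, |d t| ≤ K * |y t|)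
    (h0 : y 0 = 0) : ∀ t, 0 ≤ t → y t = 0 := by
  intro t ht
  have H := norm_le_gronwallBound_of_norm_deriv_right_le (f := y) (f' := d)
    (δ := 0) (K := K) (ε := 0) (a := 0) (b := t)
    (fun s _ => (hy s).continuousAt.continuousWithinAt)
    (fun s _ => (hy s).hasDerivWithinAt)
    (by simp [h0]) (fun s _ => by simpa [Real.norm_eq_abs] using hb s)
    t (by simp [ht])
  rw [gronwallBound_ε0_δ0] at H
  exact norm_le_zero_iff.mp H

/-- Reverse Grönwall: if `|y'| ≤ K |y|` and `y t₀ = 0` with `t₀ ≥ 0`, then `y 0 = 0`. -/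
lemma aux_gronwall_zero_rev (y d : ℝ → ℝ) (K : ℝ)
    (hy : ∀ t, HasDerivAt y (d t) t) (hb : ∀ t, |d t| ≤ K * |y t|)
    (t₀ : ℝ) (ht₀ : 0 ≤ t₀) (h0 : y t₀ = 0) : y 0 = 0 := by
  have key : ∀ s, 0 ≤ s → y (t₀ - s) = 0 := by
    apply aux_gronwall_zero (fun s => y (t₀ - s)) (fun s => -d (t₀ - s)) K
    · intro s
      have h1 : HasDerivAt (fun s : ℝ => t₀ - s) (-1) s := (hasDerivAt_id s).const_sub t₀
      have := (hy (t₀ - s)).comp s h1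
      have h2 : d (t₀ - s) * -1 = -d (t₀ - s) := by ring
      rw [h2] at this; exact this
    · intro s
      simpa using hb (t₀ - s)
    · simp [h0]
  have := key t₀ ht₀
  simpa using this

/-- `E ⊆ B`. -/
lemma aux_Eset_subset_Bset {r : ℝ} (hr0 : 0 < r) : Eset r ⊆ Bset r := by
  rintro v ((⟨hx, hy, hz⟩ | ⟨hx, hy, hz⟩) | ⟨k, hk, hx, hy, hz⟩) <;>
    simp only [Bset, mem_setOf_eq]
  · obtain ⟨h1, h2⟩ := hx
    rw [hy, hz]; nlinarith
  · obtain ⟨h1, h2⟩ := hy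
    rw [hx, hz]; nlinarith
  · obtain ⟨h1, h2⟩ := hy
    have hk1 : (1 : ℝ) ≤ (k : ℝ) := by exact_mod_cast hk
    have hkpos : (0 : ℝ) < (k : ℝ) := by linarith
    have hrk0 : 0 < r / (k : ℝ) := div_pos hr0 hkpos
    have hrkr : r / (k : ℝ) ≤ r := div_le_self hr0.le hk1
    rw [hx, hz]; nlinarith

/-- Vertical truncation stays in `E`. -/
lemma aux_Eset_seg {r : ℝ} {v : ℝ × ℝ × ℝ} (hv : v ∈ Eset r) {y' : ℝ}
    (h0 : 0 ≤ y') (h1 : y' ≤ v.2.1) : ((v.1, y', 0) : ℝ × ℝ × ℝ) ∈ Eset r := by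
  rcases hv with (⟨hx, hy, hz⟩ | ⟨hx, hy, hz⟩) | ⟨k, hk, hx, hy, hz⟩
  · left; left
    have : y' = 0 := le_antisymm (hy ▸ h1) h0
    exact ⟨hx, this, rfl⟩
  · left; right
    exact ⟨hx, ⟨h0, le_trans h1 hy.2⟩, rfl⟩
  · right
    exact ⟨k, hk, hx, ⟨h0, le_trans h1 hy.2⟩, rfl⟩

/-- `W̃ = ⋃_{k ∈ ℤ} E_k ∪ {(x,0,0) : x ∈ ℝ}` is contained in the stable set
of the origin: for every `b ∈ W̃`, `fⁿ(b) → (0,0,0)`, i.e. `W̃ ⊆ W^s_f(0,0,0)`. -/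
theorem stmt_13 (r : ℝ) (hr : r ∈ Ioo (0 : ℝ) (1 / 2))
    (ρ : ℝ × ℝ × ℝ → ℝ) (hρs : ContDiff ℝ (⊤ : ℕ∞) ρ) (hρ01 : ∀ v, ρ v ∈ Icc (0 : ℝ) 1)
    (hρE : ρ ⁻¹' {1} = Eset r) (hρ0 : ∀ v ∉ interior (Bset r), ρ v = 0)
    (X : ℝ × ℝ × ℝ → ℝ × ℝ × ℝ)
    (hX : ∀ n : ℤ, ∀ v ∈ Bn r n, X v = (0, -(ρ (T2pow (-n) v) * v.2.1 * Real.log 4), 0))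
    (hX0 : ∀ v : ℝ × ℝ × ℝ, (∀ n : ℤ, v ∉ Bn r n) → X v = 0)
    (φ : ℝ → ℝ × ℝ × ℝ → ℝ × ℝ × ℝ)
    (hφ0 : ∀ v, φ 0 v = v)
    (hφd : ∀ (v : ℝ × ℝ × ℝ) (t : ℝ), HasDerivAt (fun s => φ s v) (X (φ t v)) t)
    (f : ℝ × ℝ × ℝ → ℝ × ℝ × ℝ) (hf : ∀ v, f v = T1 (φ 1 v)) :
    (∀ b ∈ Wtilde r,
      Tendsto (fun n : ℕ => f^[n] b) atTop (𝓝 ((0, 0, 0) : ℝ × ℝ × ℝ))) ∧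
    Wtilde r ⊆ Ws f ((0, 0, 0) : ℝ × ℝ × ℝ) := by
  obtain ⟨hr0, hr2⟩ := hr
  have log4_pos : (0 : ℝ) < Real.log 4 := Real.log_pos (by norm_num)
  -- structure of X
  have hXstruct : ∀ v : ℝ × ℝ × ℝ, ∃ c : ℝ, 0 ≤ c ∧ c ≤ Real.log 4 ∧
      X v = (0, -(c * v.2.1), 0) := by
    intro v
    by_cases h : ∃ n : ℤ, v ∈ Bn r n
    · obtain ⟨n, hn⟩ := h
      refine ⟨ρ (T2pow (-n) v) * Real.log 4,
        mul_nonneg (hρ01 _).1 log4_pos.le, ?_, ?_⟩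
      · nlinarith [(hρ01 (T2pow (-n) v)).2, log4_pos]
      · rw [hX n v hn]
        exact Prod.ext rfl (Prod.ext (by ring) rfl)
    · push_neg at h
      exact ⟨0, le_refl _, log4_pos.le, by simp [hX0 v h]; rfl⟩
  have hX1 : ∀ v, (X v).1 = 0 := by
    intro v; obtain ⟨c, _, _, h⟩ := hXstruct v; rw [h]
  have hX3 : ∀ v, (X v).2.2 = 0 := by
    intro v; obtain ⟨c, _, _, h⟩ := hXstruct v; rw [h]
  have hX2 : ∀ v, ∃ c : ℝ, 0 ≤ c ∧ c ≤ Real.log 4 ∧ (X v).2.1 = -(c * v.2.1) := by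
    intro v; obtain ⟨c, h1, h2, h⟩ := hXstruct v; exact ⟨c, h1, h2, by rw [h]⟩
  -- component derivatives
  have hYd : ∀ (b : ℝ × ℝ × ℝ) (t : ℝ),
      HasDerivAt (fun u => (φ u b).2.1) ((X (φ t b)).2.1) t := by
    intro b t
    simpa using (((hφd b t).hasFDerivAt.snd).fst).hasDerivAt
  have hxconst : ∀ (b : ℝ × ℝ × ℝ) (t : ℝ), (φ t b).1 = b.1 := by
    intro b t
    have hd : ∀ s, HasDerivAt (fun u => (φ u b).1) 0 s := by
      intro s
      have := ((hφd b s).hasFDerivAt.fst).hasDerivAt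
      simpa [hX1] using this
    have := is_const_of_deriv_eq_zero (f := fun u => (φ u b).1)
      (fun s => (hd s).differentiableAt) (fun s => (hd s).deriv) t 0
    simpa [hφ0] using this
  have hzconst : ∀ (b : ℝ × ℝ × ℝ) (t : ℝ), (φ t b).2.2 = b.2.2 := by
    intro b t
    have hd : ∀ s, HasDerivAt (fun u => (φ u b).2.2) 0 s := by
      intro s
      have := (((hφd b s).hasFDerivAt.snd).snd).hasDerivAt
      simpa [hX3] using this
    have := is_const_of_deriv_eq_zero (f := fun u => (φ u b).2.2)
      (fun s => (hd s).differentiableAt) (fun s => (hd s).deriv) t 0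
    simpa [hφ0] using this
  have hbound : ∀ (b : ℝ × ℝ × ℝ) (t : ℝ),
      |(X (φ t b)).2.1| ≤ Real.log 4 * |(φ t b).2.1| := by
    intro b t
    obtain ⟨c, hc0, hc4, he⟩ := hX2 (φ t b)
    rw [he, abs_neg, abs_mul]
    have : |c| ≤ Real.log 4 := by rwa [abs_of_nonneg hc0]
    exact mul_le_mul_of_nonneg_right this (abs_nonneg _)
  -- zero initial y stays zero
  have hzero : ∀ (b : ℝ × ℝ × ℝ), b.2.1 = 0 → ∀ t, 0 ≤ t → (φ t b).2.1 = 0 := by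
    intro b hb t ht
    exact aux_gronwall_zero (fun u => (φ u b).2.1) (fun u => (X (φ u b)).2.1)
      (Real.log 4) (hYd b) (hbound b) (by simp [hφ0, hb]) t ht
  -- bounds 0 ≤ y t ≤ y 0 on [0,1]
  have hyy : ∀ (b : ℝ × ℝ × ℝ), 0 ≤ b.2.1 → ∀ t ∈ Icc (0:ℝ) 1,
      0 ≤ (φ t b).2.1 ∧ (φ t b).2.1 ≤ b.2.1 := by
    intro b hb t ht
    rcases eq_or_lt_of_le hb with h0 | h0
    · have := hzero b h0.symm t ht.1
      rw [this]; exact ⟨le_refl _, hb⟩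
    · -- positivity
      have hpos : ∀ s ∈ Icc (0:ℝ) 1, 0 < (φ s b).2.1 := by
        intro s hs
        by_contra hneg
        push_neg at hneg
        have hcont : ContinuousOn (fun u => (φ u b).2.1) (Icc 0 s) :=
          fun u _ => (hYd b u).continuousAt.continuousWithinAt
        have h0mem : (0 : ℝ) ∈ Icc ((φ s b).2.1) ((φ 0 b).2.1) := by
          constructor
          · exact hneg
          · rw [hφ0]; exact h0.le
        have := intermediate_value_Icc' hs.1 hcont h0mem
        obtain ⟨t₁, ht₁, ht₁0⟩ := this
        have := aux_gronwall_zero_rev (fun u => (φ u b).2.1)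
          (fun u => (X (φ u b)).2.1) (Real.log 4) (hYd b) (hbound b) t₁ ht₁.1 ht₁0
        simp only [hφ0] at this
        exact absurd this (ne_of_gt h0)
      refine ⟨(hpos t ht).le, ?_⟩
      -- antitone
      have hanti : AntitoneOn (fun u => (φ u b).2.1) (Icc 0 1) := by
        apply antitoneOn_of_deriv_nonpos (convex_Icc 0 1)
        · exact fun u _ => (hYd b u).continuousAt.continuousWithinAt
        · intro u hu
          exact ((hYd b u).differentiableAt).differentiableWithinAt
        · intro u hu
          rw [interior_Icc] at hu
          rw [(hYd b u).deriv]
          obtain ⟨c, hc0, hc4, he⟩ := hX2 (φ u b)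
          rw [he]
          have := hpos u ⟨hu.1.le, hu.2.le⟩
          nlinarith
      have := hanti (left_mem_Icc.mpr (by norm_num)) ht ht.1
      simpa [hφ0] using this
  -- the key step: on Wtilde, f acts as T2
  have hkey : ∀ b ∈ Wtilde r, f b = T2 b ∧ T2 b ∈ Wtilde r := by
    intro b hb
    rcases hb with hb | hb
    · -- b ∈ some Ek
      rw [mem_iUnion] at hb
      obtain ⟨k, e, he, hbe⟩ := hb
      set s₀ : ℝ := (2 : ℝ) ^ (-k) with hs₀
      have hs₀pos : (0 : ℝ) < s₀ := zpow_pos (by norm_num) _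
      have hb1 : b.1 = s₀ * e.1 := by rw [← hbe]; rfl
      have hb21 : b.2.1 = s₀ * e.2.1 := by rw [← hbe]; rfl
      have hb22 : b.2.2 = s₀ * e.2.2 := by rw [← hbe]; rfl
      -- facts about e
      have hey0 : 0 ≤ e.2.1 := by
        rcases he with (⟨_, hy, _⟩ | ⟨_, hy, _⟩) | ⟨_, _, _, hy, _⟩
        · rw [hy]
        · exact hy.1
        · exact hy.1
      have hez : e.2.2 = 0 := by
        rcases he with (⟨_, _, hz⟩ | ⟨_, _, hz⟩) | ⟨_, _, _, _, hz⟩ <;> exact hz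
      have hbz : b.2.2 = 0 := by rw [hb22, hez, mul_zero]
      have hby0 : 0 ≤ b.2.1 := by rw [hb21]; positivity
      -- membership of the flow in Ek
      have hmem : ∀ t ∈ Icc (0:ℝ) 1, φ t b ∈ Ek r k := by
        intro t ht
        obtain ⟨hy0, hy1⟩ := hyy b hby0 t ht
        refine ⟨(e.1, (φ t b).2.1 / s₀, 0), ?_, ?_⟩
        · apply aux_Eset_seg he
          · positivity
          · rw [div_le_iff₀ hs₀pos, mul_comm]
            rw [hb21] at hy1; exact hy1
        · show s₀ • ((e.1, (φ t b).2.1 / s₀, 0) : ℝ × ℝ × ℝ) = φ t b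
          have h1 : (φ t b).1 = b.1 := hxconst b t
          have h3 : (φ t b).2.2 = b.2.2 := hzconst b t
          refine Prod.ext ?_ (Prod.ext ?_ ?_)
          · simp only [Prod.smul_fst, smul_eq_mul]
            rw [h1, hb1]
          · simp only [Prod.smul_snd, Prod.smul_fst, smul_eq_mul]
            field_simp
          · simp only [Prod.smul_snd, smul_eq_mul]
            rw [h3, hbz, mul_zero]
      -- exact ODE on [0,1]
      have hDexact : ∀ t ∈ Icc (0:ℝ) 1,
          (X (φ t b)).2.1 = -(Real.log 4 * (φ t b).2.1) := by
        intro t ht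
        obtain ⟨e', he', heq⟩ := hmem t ht
        have hBmem : φ t b ∈ Bn r k := ⟨e', aux_Eset_subset_Bset hr0 he', heq⟩
        have hXv := hX k (φ t b) hBmem
        have hT : T2pow (-k) (φ t b) = e' := by
          rw [← heq]
          show (2:ℝ) ^ (-(-k)) • ((2:ℝ) ^ (-k) • e') = e'
          rw [smul_smul, neg_neg, ← zpow_add₀ (by norm_num : (2:ℝ) ≠ 0)]
          simp
        have hρ1 : ρ (T2pow (-k) (φ t b)) = 1 := by
          rw [hT]
          have : e' ∈ ρ ⁻¹' {1} := by rw [hρE]; exact he'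
          simpa using this
        rw [hXv]
        show -(ρ (T2pow (-k) (φ t b)) * (φ t b).2.1 * Real.log 4) = _
        rw [hρ1]; ring
      -- integrate: y 1 = y 0 / 4
      have hy1 : (φ 1 b).2.1 = b.2.1 / 4 := by
        set h : ℝ → ℝ := fun t => (φ t b).2.1 * Real.exp (t * Real.log 4) with hh
        have hder : ∀ t ∈ Ico (0:ℝ) 1, HasDerivWithinAt h 0 (Ici t) t := by
          intro t ht
          have hexp : HasDerivAt (fun u : ℝ => Real.exp (u * Real.log 4))
              (Real.exp (t * Real.log 4) * (1 * Real.log 4)) t :=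
            ((hasDerivAt_id t).mul_const (Real.log 4)).exp
          have := (hYd b t).mul hexp
          rw [hDexact t ⟨ht.1, ht.2.le⟩] at this
          have h0 : -(Real.log 4 * (φ t b).2.1) * Real.exp (t * Real.log 4) +
              (φ t b).2.1 * (Real.exp (t * Real.log 4) * (1 * Real.log 4)) = 0 := by ring
          rw [h0] at this
          exact this.hasDerivWithinAt
        have hcont : ContinuousOn h (Icc 0 1) := by
          intro t _
          have hexp : HasDerivAt (fun u : ℝ => Real.exp (u * Real.log 4))
              (Real.exp (t * Real.log 4) * (1 * Real.log 4)) t :=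
            ((hasDerivAt_id t).mul_const (Real.log 4)).exp
          exact ((hYd b t).mul hexp).continuousAt.continuousWithinAt
        have := constant_of_has_deriv_right_zero hcont hder 1 (right_mem_Icc.mpr (by norm_num))
        have h1 : h 1 = h 0 := this
        rw [hh] at h1
        simp only [one_mul, zero_mul, Real.exp_zero, mul_one] at h1
        rw [hφ0] at h1
        rw [Real.exp_log (by norm_num : (0:ℝ) < 4)] at h1
        linarith
      -- conclude
      constructor
      · rw [hf]
        have hφ1 : φ 1 b = (b.1, b.2.1 / 4, 0) := by
          refine Prod.ext ?_ (Prod.ext ?_ ?_)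
          · exact hxconst b 1
          · exact hy1
          · rw [hzconst b 1, hbz]
        rw [hφ1]
        show ((b.1 / 2, 2 * (b.2.1 / 4), 2 * (0:ℝ)) : ℝ × ℝ × ℝ) = _
        show _ = ((b.1 / 2, b.2.1 / 2, b.2.2 / 2) : ℝ × ℝ × ℝ)
        rw [hbz]
        norm_num
        ring
      · left
        rw [mem_iUnion]
        refine ⟨k + 1, e, he, ?_⟩
        show (2:ℝ) ^ (-(k+1)) • e = T2 b
        rw [← hbe]
        show (2:ℝ) ^ (-(k+1)) • e =
          (((2:ℝ)^(-k) • e).1 / 2, ((2:ℝ)^(-k) • e).2.1 / 2, ((2:ℝ)^(-k) • e).2.2 / 2)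
        have hz : (2:ℝ) ^ (-(k+1)) = (2:ℝ) ^ (-k) / 2 := by
          rw [neg_add, zpow_add₀ (by norm_num : (2:ℝ) ≠ 0), zpow_neg_one]
          ring
        refine Prod.ext ?_ (Prod.ext ?_ ?_) <;>
          simp only [Prod.smul_fst, Prod.smul_snd, smul_eq_mul, hz] <;> ring
    · -- b on the line
      obtain ⟨hb1, hb2⟩ := hb
      constructor
      · rw [hf]
        have hφ1 : φ 1 b = (b.1, 0, 0) := by
          refine Prod.ext ?_ (Prod.ext ?_ ?_)
          · exact hxconst b 1
          · exact hzero b hb1 1 (by norm_num)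
          · rw [hzconst b 1]; exact hb2
        rw [hφ1]
        show ((b.1 / 2, 2 * (0:ℝ), 2 * (0:ℝ)) : ℝ × ℝ × ℝ) = _
        show _ = ((b.1 / 2, b.2.1 / 2, b.2.2 / 2) : ℝ × ℝ × ℝ)
        rw [hb1, hb2]
        norm_num
      · right
        show (T2 b).2.1 = 0 ∧ (T2 b).2.2 = 0
        show b.2.1 / 2 = 0 ∧ b.2.2 / 2 = 0
        rw [hb1, hb2]
        norm_num
  -- T2 as scalar multiplication
  have hT2smul : ∀ v : ℝ × ℝ × ℝ, T2 v = ((2:ℝ)⁻¹) • v := by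
    intro v
    refine Prod.ext ?_ (Prod.ext ?_ ?_) <;>
      simp only [T2, Prod.smul_fst, Prod.smul_snd, smul_eq_mul] <;> ring
  -- iteration
  have hiter : ∀ b ∈ Wtilde r, ∀ n : ℕ,
      f^[n] b = ((2:ℝ)⁻¹)^n • b ∧ f^[n] b ∈ Wtilde r := by
    intro b hb n
    induction n with
    | zero => simpa using hb
    | succ n ih =>
      obtain ⟨heq, hmem⟩ := ih
      have h2 := hkey _ hmem
      constructor
      · rw [Function.iterate_succ_apply', h2.1, hT2smul, heq, smul_smul, pow_succ]
        ring_nf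
      · rw [Function.iterate_succ_apply', h2.1]
        exact h2.2
  have hmain : ∀ b ∈ Wtilde r,
      Tendsto (fun n : ℕ => f^[n] b) atTop (𝓝 ((0, 0, 0) : ℝ × ℝ × ℝ)) := by
    intro b hb
    have ht : Tendsto (fun n : ℕ => ((2:ℝ)⁻¹)^n • b) atTop (𝓝 (((0:ℝ)) • b)) :=
      (tendsto_pow_atTop_nhds_zero_of_lt_one (by norm_num) (by norm_num)).smul_const b
    rw [zero_smul] at ht
    have h000 : ((0,0,0) : ℝ × ℝ × ℝ) = (0 : ℝ × ℝ × ℝ) := rfl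
    rw [h000]
    exact ht.congr (fun n => ((hiter b hb n).1).symm)
  refine ⟨hmain, ?_⟩
  intro b hb
  have h0mem : ((0,0,0) : ℝ × ℝ × ℝ) ∈ Wtilde r := Or.inr ⟨rfl, rfl⟩
  have t1 := hmain _ h0mem
  have t2 := hmain b hb
  have := (t1.sub t2).norm
  simpa [Ws] using this

end
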